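/- arXiv:2601.18429 — 3 statements merged into one kernel-verified Lean document; each statement's English description precedes it below -/
import Mathlib

section
/- Let M be a finite monoid and x, y ∈ M with x J y and x ≤_R y (i.e., x = yα for some α ∈ M). Then x R y, i.e., there also exists β with y = xβ. -/
def JLe {M : Type*} [Monoid M] (x y : M) : Prop := ∃ a b : M, x = a * y * b

def JEq {M : Type*} [Monoid M] (x y : M) : Prop := JLe x y ∧ JLe y x

lemma exists_idem_pow {M : Type*} [Monoid M] [Finite M] (c : M) :
    ∃ n : ℕ, 0 < n ∧ c ^ n * c ^ n = c ^ n := by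
  obtain ⟨m, n, hmn, h⟩ := Finite.exists_ne_map_eq_of_infinite (fun k : ℕ => c ^ k)
  wlog hlt : m < n generalizing m n
  · exact this n m hmn.symm h.symm (by omega)
  set d := n - m with hd
  have hd0 : 0 < d := by omega
  have key : ∀ j, m ≤ j → c ^ (j + d) = c ^ j := by
    intro j hj
    have : c ^ (j + d) = c ^ (j - m) * c ^ (m + d) := by
      rw [← pow_add]; congr 1; omega
    rw [this, show m + d = n by omega, ← h, ← pow_add, show j - m + m = j by omega]
  have key2 : ∀ k j, m ≤ j → c ^ (j + k * d) = c ^ j := by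
    intro k
    induction k with
    | zero => simp
    | succ k ih =>
      intro j hj
      have : j + (k + 1) * d = (j + k * d) + d := by ring
      rw [this, key _ (by omega), ih j hj]
  refine ⟨(m + 1) * d, by positivity, ?_⟩
  rw [← pow_add]
  have := key2 ((m + 1)) ((m + 1) * d) (Nat.le_of_lt (by nlinarith))
  calc c ^ ((m+1)*d + (m+1)*d) = c ^ ((m+1)*d) := key2 (m+1) ((m+1)*d)
        (le_trans (by omega) (Nat.le_mul_of_pos_right (m+1) hd0))

/-- In a finite monoid, if x J y and x ≤_R y, then x R y. -/
theorem rLe_and_jEq_imp_rEq {M : Type*} [Monoid M] [Finite M] (x y : M)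
    (hJ : JEq x y) (hR : ∃ α : M, x = y * α) : ∃ β : M, y = x * β := by
  obtain ⟨α, hα⟩ := hR
  obtain ⟨_, a, b, hab⟩ := hJ
  -- y = a * x * b = a * y * (α * b)
  set c := α * b with hc
  have hy : y = a * y * c := by
    conv_lhs => rw [hab, hα]
    simp [hc, mul_assoc]
  have hiter : ∀ k : ℕ, y = a ^ k * y * c ^ k := by
    intro k
    induction k with
    | zero => simp
    | succ k ih =>
      calc y = a * y * c := hy
        _ = a * (a ^ k * y * c ^ k) * c := by rw [← ih]
        _ = a ^ (k+1) * y * c ^ (k+1) := by rw [pow_succ' a k, pow_succ c k]; simp [mul_assoc]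
  obtain ⟨n, hn, hidem⟩ := exists_idem_pow c
  have hyc : y * c ^ n = y := by
    calc y * c ^ n = (a ^ n * y * c ^ n) * c ^ n := by rw [← hiter n]
      _ = a ^ n * y * (c ^ n * c ^ n) := by group
      _ = a ^ n * y * c ^ n := by rw [hidem]
      _ = y := (hiter n).symm
  refine ⟨b * c ^ (n - 1), ?_⟩
  rw [hα]
  have hn1 : n - 1 + 1 = n := by omega
  calc y = y * c ^ n := hyc.symm
    _ = y * (c * c ^ (n-1)) := by rw [← pow_succ', hn1]
    _ = y * α * (b * c ^ (n-1)) := by rw [hc]; simp [mul_assoc]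
end

section
/- Let M be a finite monoid, w = w₁⋯wₙ ∈ M* a word, and j ≤ n. Then there exist integers j = ℓ₀ < ℓ₁ < ⋯ < ℓₘ = n+1 with m ≤ |M| such that: (i) for 0 ≤ s < m and ℓₛ ≤ i < ℓₛ₊₁, the products w_j⋯w_{ℓₛ} and w_j⋯w_i are J-equivalent; and (ii) for 0 ≤ s < m−1, the products w_j⋯w_{ℓₛ₊₁−1} and w_j⋯w_{ℓₛ₊₁} are not J-equivalent. -/
/-- The product `w_j ⋯ w_k` of the letters of `w` from position `j` to position `k`. -/
def wprod {M : Type*} [Monoid M] (w : ℕ → M) (j k : ℕ) : M :=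
  ((List.range' j (k + 1 - j)).map w).prod

namespace JLe

variable {M : Type*} [Monoid M]

theorem refl (x : M) : JLe x x := ⟨1, 1, by simp⟩

theorem trans {x y z : M} (hxy : JLe x y) (hyz : JLe y z) : JLe x z := by
  obtain ⟨a, b, rfl⟩ := hxy
  obtain ⟨c, d, rfl⟩ := hyz
  exact ⟨a * c, d * b, by simp only [mul_assoc]⟩

theorem mul_right (x y : M) : JLe (x * y) x := ⟨1, y, by rw [one_mul]⟩

end JLe

instance {M : Type*} [Monoid M] : IsPreorder M JEq where
  refl x := ⟨JLe.refl x, JLe.refl x⟩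
  trans _ _ _ hxy hyz := ⟨hxy.1.trans hyz.1, hyz.2.trans hxy.2⟩

theorem exists_run_decomposition {α : Type*} (r : α → α → Prop) [IsPreorder α r] (p : ℕ → α)
    {j n : ℕ} (hjn : j ≤ n + 1) :
    ∃ m : ℕ, ∃ ℓ : ℕ → ℕ, ℓ 0 = j ∧ ℓ m = n + 1 ∧ StrictMono ℓ ∧
      (∀ s i, ℓ s ≤ i → i < ℓ (s + 1) → r (p (ℓ s)) (p i)) ∧
      (∀ s, s + 1 < m → ¬ r (p (ℓ (s + 1) - 1)) (p (ℓ (s + 1)))) := by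
  classical
  -- `ℓ` enumerates `j`, the positions in `(j, n]` where the sequence leaves the `r`-class of its
  -- predecessor, and every index beyond `n` (so that the enumerated set is infinite).
  set P : ℕ → Prop := fun i => i = j ∨ (j < i ∧ i ≤ n ∧ ¬ r (p (i - 1)) (p i)) ∨ n < i
  have hinf : (Set.ofPred P).Infinite := (Set.Ioi_infinite n).mono fun i hi => Or.inr (Or.inr hi)
  have hj_le : ∀ i, P i → j ≤ i := by rintro i (rfl | ⟨hi, -⟩ | hi) <;> omega
  have h0 : Nat.nth P 0 = j := by
    have hcount : Nat.count P j = 0 :=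
      Nat.count_iff_forall_not.2 fun i hi hPi => (hj_le i hPi).not_gt hi
    simpa [hcount] using Nat.nth_count (p := P) (Or.inl rfl)
  refine ⟨Nat.count P (n + 1), Nat.nth P, h0, Nat.nth_count (Or.inr (Or.inr n.lt_succ_self)),
    Nat.nth_strictMono hinf, ?_, ?_⟩
  · intro s i hsi hi
    have hj : j ≤ Nat.nth P s := h0 ▸ Nat.nth_monotone hinf s.zero_le
    induction i, hsi using Nat.le_induction with
    | base => exact refl_of r _
    | succ i hsi ih =>
      have hnot : ¬ P (i + 1) := fun h => by
        have := Nat.le_nth_of_lt_nth_succ hi h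
        omega
      simp only [P, not_or, not_and, not_lt, not_not] at hnot
      have hstep : r (p i) (p (i + 1)) := by simpa using hnot.2.1 (by omega) hnot.2.2
      exact trans_of r (ih (by omega)) hstep
  · intro s hs
    have hlo : j < Nat.nth P (s + 1) := h0 ▸ Nat.nth_strictMono hinf s.succ_pos
    have hhi : Nat.nth P (s + 1) < n + 1 := Nat.nth_lt_of_lt_count hs
    rcases Nat.nth_mem_of_infinite hinf (s + 1) with h | ⟨-, -, h⟩ | h
    · omega
    · exact h
    · omega

theorem wprod_JLe_wprod_of_le {M : Type*} [Monoid M] (w : ℕ → M) (j : ℕ) {i i' : ℕ}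
    (h : i ≤ i') : JLe (wprod w j i') (wprod w j i) := by
  have hsplit : wprod w j i' =
      wprod w j i * ((List.range' (j + (i + 1 - j)) (i' + 1 - j - (i + 1 - j))).map w).prod := by
    have hrange := List.range'_append (s := j) (m := i + 1 - j) (step := 1)
      (n := i' + 1 - j - (i + 1 - j))
    rw [one_mul, Nat.add_sub_cancel' (show i + 1 - j ≤ i' + 1 - j by omega)] at hrange
    rw [wprod, wprod, ← List.prod_append, ← List.map_append, hrange]
  exact hsplit ▸ JLe.mul_right _ _

section JAntitone

variable {M : Type*} [Monoid M] {p : ℕ → M}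

theorem not_JLe_of_JEq_drop (hp : ∀ ⦃a b⦄, a ≤ b → JLe (p b) (p a)) {a b c : ℕ}
    (hab : a < b) (hbc : b ≤ c) (hdrop : ¬ JEq (p (b - 1)) (p b)) : ¬ JLe (p a) (p c) :=
  fun hac => hdrop ⟨(hp (by omega)).trans (hac.trans (hp hbc)), hp (by omega)⟩

theorem le_card_of_JEq_drops [Finite M] (hp : ∀ ⦃a b⦄, a ≤ b → JLe (p b) (p a))
    {ℓ : ℕ → ℕ} (hℓ : StrictMono ℓ) {m : ℕ}
    (hdrop : ∀ s, s + 1 < m → ¬ JEq (p (ℓ (s + 1) - 1)) (p (ℓ (s + 1)))) :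
    m ≤ Nat.card M := by
  have hne : ∀ s t : Fin m, s < t → p (ℓ s) ≠ p (ℓ t) := fun s t hst heq =>
    not_JLe_of_JEq_drop hp (hℓ s.val.lt_succ_self) (hℓ.monotone hst) (hdrop s (by omega))
      (heq ▸ JLe.refl _)
  have hinj : Function.Injective fun s : Fin m => p (ℓ s) := fun s t heq => by
    by_contra hst
    rcases lt_or_gt_of_ne hst with hlt | hlt
    · exact hne s t hlt heq
    · exact hne t s hlt heq.symm
  simpa using Nat.card_le_card_of_injective _ hinj

end JAntitone

theorem j_falling_general {M : Type*} [Monoid M] [Finite M] (w : ℕ → M) (n j : ℕ)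
    (hjn : j ≤ n) :
    ∃ m : ℕ, m ≤ Nat.card M ∧ ∃ ℓ : ℕ → ℕ,
      ℓ 0 = j ∧ ℓ m = n + 1 ∧
      (∀ s < m, ℓ s < ℓ (s + 1)) ∧
      (∀ s < m, ∀ i, ℓ s ≤ i → i < ℓ (s + 1) → JEq (wprod w j (ℓ s)) (wprod w j i)) ∧
      (∀ s, s + 1 < m → ¬ JEq (wprod w j (ℓ (s + 1) - 1)) (wprod w j (ℓ (s + 1)))) := by
  obtain ⟨m, ℓ, h0, hm, hℓ, hrun, hdrop⟩ :=
    exists_run_decomposition JEq (wprod w j) (show j ≤ n + 1 by omega)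
  have hcard := le_card_of_JEq_drops (fun _ _ => wprod_JLe_wprod_of_le w j) hℓ hdrop
  exact ⟨m, hcard, ℓ, h0, hm, fun s _ => hℓ s.lt_succ_self, fun s _ => hrun s, hdrop⟩

/-- Falling J-classes along left-to-right evaluation: there are indices
    j = ℓ₀ < ℓ₁ < ⋯ < ℓₘ = n+1 with m ≤ |M| such that the J-class of the prefix
    evaluation is constant on each interval and drops at each ℓ_{s+1}. -/
theorem j_falling {M : Type*} [Monoid M] [Finite M] (w : ℕ → M) (n j : ℕ)
    (hj : 1 ≤ j) (hjn : j ≤ n) :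
    ∃ m : ℕ, m ≤ Nat.card M ∧ ∃ ℓ : ℕ → ℕ,
      ℓ 0 = j ∧ ℓ m = n + 1 ∧
      (∀ s < m, ℓ s < ℓ (s + 1)) ∧
      (∀ s < m, ∀ i, ℓ s ≤ i → i < ℓ (s + 1) → JEq (wprod w j (ℓ s)) (wprod w j i)) ∧
      (∀ s, s + 1 < m → ¬ JEq (wprod w j (ℓ (s + 1) - 1)) (wprod w j (ℓ (s + 1)))) :=
  j_falling_general w n j hjn
end

section
/- Let (M, ≤) be a finite ordered monoid containing an idempotent e with 1 ≰ e. Then U₁⁻ divides (M, ≤): that is, U₁⁻ is a quotient of a submonoid of (M, ≤) in the category of ordered monoids. -/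
/-- If a finite ordered monoid has an idempotent e with 1 ≰ e, then U₁⁻
    (the two-element monoid {1, a} with a absorbing and a ≤ 1, here modeled on
    Bool with ∧ as multiplication, true = 1, false = a) divides it: there is a
    submonoid together with a surjective monotone monoid morphism onto U₁⁻. -/
theorem U1neg_divides {M : Type*} [Monoid M] [PartialOrder M] [Finite M]
    (hcompat : ∀ a b c d : M, a ≤ b → c ≤ d → a * c ≤ b * d)
    (e : M) (he : e * e = e) (hne : ¬ (1 : M) ≤ e) :
    ∃ S : Submonoid M, ∃ φ : S → Bool,
      Function.Surjective φ ∧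
      φ 1 = true ∧
      (∀ x y : S, φ (x * y) = (φ x && φ y)) ∧
      (∀ x y : S, (x : M) ≤ (y : M) → φ x ≤ φ y) := by
  classical
  have hne1 : e ≠ 1 := fun h => hne (h ▸ le_refl e)
  refine ⟨{ carrier := {1, e},
            mul_mem' := ?_,
            one_mem' := Or.inl rfl }, fun x => decide ((x : M) = 1), ?_, ?_, ?_, ?_⟩
  · rintro a b (rfl | rfl) (rfl | rfl) <;> simp [he]
  · intro b
    cases b with
    | true => exact ⟨⟨1, Or.inl rfl⟩, by simp⟩
    | false => exact ⟨⟨e, Or.inr rfl⟩, by simp [hne1]⟩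
  · simp
  · rintro ⟨x, hx | hx⟩ ⟨y, hy | hy⟩ <;> subst hx <;> subst hy <;>
      simp [he, hne1]
  · rintro ⟨x, hx | hx⟩ ⟨y, hy | hy⟩ <;> subst hx <;> subst hy <;> intro h <;>
      simp_all [hne1]
end
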